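/- arXiv:2603.28190 — 3 statements merged into one kernel-verified Lean document; each statement's English description precedes it below -/
import Mathlib

section
/- Let F and Q be exchangeable information structures on S^N with identical, strictly positive marginals. The following are equivalent: (1) F is CAD-higher than Q; (2) E(Γ,F) ⊇ E(Γ,Q) for every affine private-value coordination game Γ; (3) maxP(Γ,F) ≥ maxP(Γ,Q) for every affine private-value coordination game Γ; (4) minP(Γ,F) ≤ minP(Γ,Q) for every affine private-value coordination game Γ. -/
open Finset

attribute [local instance] Classical.propDecidable

def IsPMF {n : ℕ} {S : Type*} [Fintype S] (F : (Fin (n + 2) → S) → ℝ) : Prop :=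
  (∀ t, 0 ≤ F t) ∧ ∑ t : Fin (n + 2) → S, F t = 1

def Exchangeable {n : ℕ} {S : Type*} [Fintype S] (F : (Fin (n + 2) → S) → ℝ) : Prop :=
  ∀ (π : Equiv.Perm (Fin (n + 2))) (t : Fin (n + 2) → S), F (t ∘ π) = F t

noncomputable def marg {n : ℕ} {S : Type*} [Fintype S] [DecidableEq S]
    (F : (Fin (n + 2) → S) → ℝ) (s : S) : ℝ :=
  ∑ t : Fin (n + 2) → S, if t 0 = s then F t else 0

noncomputable def condProb {n : ℕ} {S : Type*} [Fintype S] [DecidableEq S]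
    (F : (Fin (n + 2) → S) → ℝ) (s : S) (K : Finset S) : ℝ :=
  (∑ t : Fin (n + 2) → S, if t 0 = s ∧ t 1 ∈ K then F t else 0) / marg F s

def CAD {n : ℕ} {S : Type*} [Fintype S] [DecidableEq S]
    (F Q : (Fin (n + 2) → S) → ℝ) : Prop :=
  (∀ s, marg F s = marg Q s) ∧
  ∀ s : S, condProb F s {s} ≥ condProb Q s {s} ∧
    ∀ s' : S, s' ≠ s → condProb F s {s'} ≤ condProb Q s {s'}

/-- An affine private-value coordination game: `d(A,s) = α(s) + β(s)·(k·A + l)`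
with `β ≥ 0` and `k > 0`. -/
structure AffineGame (S : Type*) where
  α : S → ℝ
  β : S → ℝ
  k : ℝ
  l : ℝ
  hβ : ∀ s, 0 ≤ β s
  hk : 0 < k

/-- Net payoff from acting when `A` others act. -/
noncomputable def payoff {S : Type*} (G : AffineGame S) (A : ℕ) (s : S) : ℝ :=
  G.α s + G.β s * (G.k * (A : ℝ) + G.l)

/-- Number of players other than player `0` who act under strategy `σ` at profile `t`. -/
def acts {n : ℕ} {S : Type*} (σ : S → Bool) (t : Fin (n + 2) → S) : ℕ :=
  (univ.filter (fun j : Fin (n + 2) => j ≠ 0 ∧ σ (t j) = true)).card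

/-- Expected net payoff of a player with signal `s`. -/
noncomputable def U {n : ℕ} {S : Type*} [Fintype S] [DecidableEq S]
    (G : AffineGame S) (F : (Fin (n + 2) → S) → ℝ) (σ : S → Bool) (s : S) : ℝ :=
  (∑ t : Fin (n + 2) → S, if t 0 = s then F t * payoff G (acts σ t) s else 0) / marg F s

/-- Symmetric pure-strategy Bayes-Nash equilibrium. -/
def IsEquilibrium {n : ℕ} {S : Type*} [Fintype S] [DecidableEq S]
    (G : AffineGame S) (F : (Fin (n + 2) → S) → ℝ) (σ : S → Bool) : Prop :=
  ∀ s : S, (σ s = true → 0 ≤ U G F σ s) ∧ (σ s = false → U G F σ s ≤ 0)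

/-- Probability mass of the participation set of `σ`. -/
noncomputable def participation {n : ℕ} {S : Type*} [Fintype S] [DecidableEq S]
    (F : (Fin (n + 2) → S) → ℝ) (σ : S → Bool) : ℝ :=
  ∑ s ∈ univ.filter (fun s => σ s = true), marg F s

noncomputable def eqFinset {n : ℕ} {S : Type*} [Fintype S] [DecidableEq S]
    (G : AffineGame S) (F : (Fin (n + 2) → S) → ℝ) : Finset (S → Bool) :=
  univ.filter (fun σ => IsEquilibrium G F σ)

/-- Maximal participation across equilibria (`0` if there are no equilibria). -/
noncomputable def maxP {n : ℕ} {S : Type*} [Fintype S] [DecidableEq S]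
    (G : AffineGame S) (F : (Fin (n + 2) → S) → ℝ) : ℝ :=
  if h : (eqFinset G F).Nonempty then
    ((eqFinset G F).image (participation F)).max' (h.image _) else 0

/-- Minimal participation across equilibria (`1` if there are no equilibria). -/
noncomputable def minP {n : ℕ} {S : Type*} [Fintype S] [DecidableEq S]
    (G : AffineGame S) (F : (Fin (n + 2) → S) → ℝ) : ℝ :=
  if h : (eqFinset G F).Nonempty then
    ((eqFinset G F).image (participation F)).min' (h.image _) else 1


section Aux

variable {n : ℕ} {S : Type*} [Fintype S] [DecidableEq S]

/-- Participation set of a strategy. -/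
def Pset (σ : S → Bool) : Finset S := univ.filter (fun s => σ s = true)

/-- Numerator of the conditional probability. -/
noncomputable def condNum (F : (Fin (n + 2) → S) → ℝ) (s : S) (K : Finset S) : ℝ :=
  ∑ t : Fin (n + 2) → S, if t 0 = s ∧ t 1 ∈ K then F t else 0

lemma condProb_def (F : (Fin (n + 2) → S) → ℝ) (s : S) (K : Finset S) :
    condProb F s K = condNum F s K / marg F s := rfl

lemma marg_nonneg (F : (Fin (n + 2) → S) → ℝ) (hF : ∀ t, 0 ≤ F t) (s : S) :
    0 ≤ marg F s := by
  refine Finset.sum_nonneg fun t _ => ?_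
  split <;> [exact hF t; exact le_rfl]

lemma sum_marg (F : (Fin (n + 2) → S) → ℝ) (hF : IsPMF F) :
    ∑ s : S, marg F s = 1 := by
  rw [← hF.2]
  unfold marg
  rw [Finset.sum_comm]
  refine Finset.sum_congr rfl fun t _ => ?_
  simp

lemma condNum_nonneg (F : (Fin (n + 2) → S) → ℝ) (hF : ∀ t, 0 ≤ F t) (s : S) (K : Finset S) :
    0 ≤ condNum F s K := by
  refine Finset.sum_nonneg fun t _ => ?_
  split <;> [exact hF t; exact le_rfl]

lemma condProb_nonneg (F : (Fin (n + 2) → S) → ℝ) (hF : ∀ t, 0 ≤ F t) (s : S) (K : Finset S) :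
    0 ≤ condProb F s K :=
  div_nonneg (condNum_nonneg F hF s K) (marg_nonneg F hF s)

lemma condNum_split (F : (Fin (n + 2) → S) → ℝ) (s : S) (K : Finset S) :
    condNum F s K = ∑ s' ∈ K, condNum F s {s'} := by
  unfold condNum
  conv_rhs => rw [Finset.sum_comm]
  refine Finset.sum_congr rfl fun t _ => ?_
  by_cases h0 : t 0 = s
  · by_cases h1 : t 1 ∈ K
    · rw [if_pos ⟨h0, h1⟩, Finset.sum_eq_single (t 1)]
      · simp [h0]
      · intro b _ hb; simp [h0, Ne.symm hb]
      · intro h; exact absurd h1 h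
    · rw [if_neg (by tauto)]
      symm
      apply Finset.sum_eq_zero
      intro b hb
      rw [if_neg]
      rintro ⟨-, h⟩
      simp only [Finset.mem_singleton] at h
      exact h1 (h ▸ hb)
  · simp [h0]

lemma condNum_univ (F : (Fin (n + 2) → S) → ℝ) (s : S) :
    condNum F s univ = marg F s := by
  unfold condNum marg
  simp

lemma condProb_split (F : (Fin (n + 2) → S) → ℝ) (s : S) (K : Finset S) :
    condProb F s K = ∑ s' ∈ K, condProb F s {s'} := by
  simp only [condProb_def, condNum_split F s K, Finset.sum_div]

lemma condProb_univ (F : (Fin (n + 2) → S) → ℝ) (s : S) (h : 0 < marg F s) :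
    condProb F s univ = 1 := by
  rw [condProb_def, condNum_univ, div_self h.ne']

lemma condProb_compl (F : (Fin (n + 2) → S) → ℝ) (s : S) (h : 0 < marg F s) (K : Finset S) :
    condProb F s K = 1 - condProb F s Kᶜ := by
  have := condProb_univ F s h
  rw [condProb_split F s univ, ← Finset.sum_add_sum_compl K (fun s' => condProb F s {s'})] at this
  rw [condProb_split F s K, condProb_split F s Kᶜ]
  linarith

end Aux

section Aux2

variable {n : ℕ} {S : Type*} [Fintype S] [DecidableEq S]

lemma swap_sum (F : (Fin (n + 2) → S) → ℝ) (hFex : Exchangeable F)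
    (j : Fin (n + 2)) (hj : j ≠ 0) (s : S) (σ : S → Bool) :
    ∑ t : Fin (n + 2) → S, (if t 0 = s ∧ σ (t j) = true then F t else 0)
      = condNum F s (Pset σ) := by
  unfold condNum
  refine Fintype.sum_equiv (Equiv.arrowCongr (Equiv.swap (1 : Fin (n + 2)) j) (Equiv.refl S))
    _ _ fun t => ?_
  have h0 : (Equiv.swap (1 : Fin (n + 2)) j) 0 = 0 := by
    apply Equiv.swap_apply_of_ne_of_ne
    · exact Fin.zero_ne_one
    · exact Ne.symm hj
  have h1 : (Equiv.swap (1 : Fin (n + 2)) j) 1 = j := Equiv.swap_apply_left 1 j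
  have he : ∀ (x : Fin (n + 2)),
      (Equiv.arrowCongr (Equiv.swap (1 : Fin (n + 2)) j) (Equiv.refl S)) t x
        = t ((Equiv.swap (1 : Fin (n + 2)) j) x) := by
    intro x
    simp [Equiv.arrowCongr, Equiv.symm_swap]
  have hF : F ((Equiv.arrowCongr (Equiv.swap (1 : Fin (n + 2)) j) (Equiv.refl S)) t) = F t := by
    rw [show ((Equiv.arrowCongr (Equiv.swap (1 : Fin (n + 2)) j) (Equiv.refl S)) t)
        = t ∘ (Equiv.swap (1 : Fin (n + 2)) j) from funext he]
    exact hFex _ t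
  rw [he 0, he 1, h0, h1, hF]
  simp [Pset]

lemma sum_acts (F : (Fin (n + 2) → S) → ℝ) (hFex : Exchangeable F) (σ : S → Bool) (s : S) :
    ∑ t : Fin (n + 2) → S, (if t 0 = s then F t * (acts σ t : ℝ) else 0)
      = (n + 1 : ℝ) * condNum F s (Pset σ) := by
  have hacts : ∀ t : Fin (n + 2) → S, ((acts σ t : ℕ) : ℝ)
      = ∑ j : Fin (n + 2), (if j ≠ 0 ∧ σ (t j) = true then (1 : ℝ) else 0) := by
    intro t
    rw [Finset.sum_boole]
    rfl
  calc ∑ t : Fin (n + 2) → S, (if t 0 = s then F t * (acts σ t : ℝ) else 0)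
      = ∑ t : Fin (n + 2) → S, ∑ j : Fin (n + 2),
          (if j ≠ 0 then (if t 0 = s ∧ σ (t j) = true then F t else 0) else 0) := by
        refine Finset.sum_congr rfl fun t _ => ?_
        by_cases h0 : t 0 = s
        · rw [if_pos h0, hacts t, Finset.mul_sum]
          refine Finset.sum_congr rfl fun j _ => ?_
          by_cases hj : j ≠ 0 <;> by_cases hσ : σ (t j) = true <;>
            simp [hj, hσ, h0]
        · rw [if_neg h0]
          symm
          apply Finset.sum_eq_zero
          intro j _
          simp [h0]
    _ = ∑ j : Fin (n + 2), (if j ≠ 0 then condNum F s (Pset σ) else 0) := by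
        rw [Finset.sum_comm]
        refine Finset.sum_congr rfl fun j _ => ?_
        by_cases hj : j ≠ 0
        · simp only [if_pos hj]
          exact swap_sum F hFex j hj s σ
        · simp [hj]
    _ = (n + 1 : ℝ) * condNum F s (Pset σ) := by
        rw [Finset.sum_ite, Finset.sum_const, Finset.sum_const, smul_zero, add_zero]
        have hcard : (univ.filter fun j : Fin (n + 2) => j ≠ 0).card = n + 1 := by
          rw [Finset.filter_ne', Finset.card_erase_of_mem (Finset.mem_univ 0),
            Finset.card_univ, Fintype.card_fin]
          omega
        rw [hcard, nsmul_eq_mul]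
        push_cast
        ring

lemma U_eq (G : AffineGame S) (F : (Fin (n + 2) → S) → ℝ) (hFex : Exchangeable F)
    (σ : S → Bool) (s : S) (hpos : 0 < marg F s) :
    U G F σ s = G.α s + G.β s * (G.k * ((n + 1 : ℝ) * condProb F s (Pset σ)) + G.l) := by
  have hnum : ∑ t : Fin (n + 2) → S, (if t 0 = s then F t * payoff G (acts σ t) s else 0)
      = marg F s * (G.α s + G.β s * G.l)
        + G.β s * G.k * ((n + 1 : ℝ) * condNum F s (Pset σ)) := by
    have : ∀ t : Fin (n + 2) → S, (if t 0 = s then F t * payoff G (acts σ t) s else 0)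
        = (if t 0 = s then F t else 0) * (G.α s + G.β s * G.l)
          + G.β s * G.k * (if t 0 = s then F t * (acts σ t : ℝ) else 0) := by
      intro t
      unfold payoff
      split <;> ring
    rw [Finset.sum_congr rfl fun t _ => this t, Finset.sum_add_distrib,
      ← Finset.sum_mul, ← Finset.mul_sum, sum_acts F hFex σ s]
    rfl
  rw [U, hnum, condProb_def]
  field_simp
  ring

end Aux2

section Aux3

variable {n : ℕ} {S : Type*} [Fintype S] [DecidableEq S]

lemma cp_mono (F Q : (Fin (n + 2) → S) → ℝ)
    (hpos : ∀ s, 0 < marg F s) (hCAD : CAD F Q) (σ : S → Bool) (s : S) :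
    (σ s = true → condProb Q s (Pset σ) ≤ condProb F s (Pset σ)) ∧
    (σ s = false → condProb F s (Pset σ) ≤ condProb Q s (Pset σ)) := by
  have hposQ : 0 < marg Q s := hCAD.1 s ▸ hpos s
  constructor
  · intro ht
    rw [condProb_compl F s (hpos s), condProb_compl Q s hposQ]
    have : condProb F s (Pset σ)ᶜ ≤ condProb Q s (Pset σ)ᶜ := by
      rw [condProb_split F, condProb_split Q]
      refine Finset.sum_le_sum fun s' hs' => ?_
      have hne : s' ≠ s := by
        rintro rfl
        simp [Pset, ht] at hs'
      exact (hCAD.2 s).2 s' hne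
    linarith
  · intro hf
    rw [condProb_split F, condProb_split Q]
    refine Finset.sum_le_sum fun s' hs' => ?_
    have hne : s' ≠ s := by
      rintro rfl
      simp [Pset, hf] at hs'
    exact (hCAD.2 s).2 s' hne

lemma cad_imp_incl (F Q : (Fin (n + 2) → S) → ℝ)
    (hFex : Exchangeable F) (hQex : Exchangeable Q)
    (hpos : ∀ s, 0 < marg F s) (hCAD : CAD F Q)
    (G : AffineGame S) (σ : S → Bool) (hQeq : IsEquilibrium G Q σ) :
    IsEquilibrium G F σ := by
  intro s
  have hposQ : 0 < marg Q s := hCAD.1 s ▸ hpos s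
  have hUF := U_eq G F hFex σ s (hpos s)
  have hUQ := U_eq G Q hQex σ s hposQ
  have hβk : 0 ≤ G.β s * G.k * ((n : ℝ) + 1) :=
    mul_nonneg (mul_nonneg (G.hβ s) G.hk.le) (by positivity)
  constructor
  · intro ht
    have h0 := (hQeq s).1 ht
    have hcp := (cp_mono F Q hpos hCAD σ s).1 ht
    rw [hUF]
    rw [hUQ] at h0
    nlinarith [mul_nonneg hβk (sub_nonneg.2 hcp)]
  · intro hf
    have h0 := (hQeq s).2 hf
    have hcp := (cp_mono F Q hpos hCAD σ s).2 hf
    rw [hUF]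
    rw [hUQ] at h0
    nlinarith [mul_nonneg hβk (sub_nonneg.2 hcp)]

end Aux3

section Aux4

variable {n : ℕ} {S : Type*} [Fintype S] [DecidableEq S]

lemma participation_eq (F : (Fin (n + 2) → S) → ℝ) (σ : S → Bool) :
    participation F σ = ∑ s ∈ Pset σ, marg F s := rfl

lemma participation_congr (F Q : (Fin (n + 2) → S) → ℝ) (hmarg : ∀ s, marg F s = marg Q s)
    (σ : S → Bool) : participation F σ = participation Q σ :=
  Finset.sum_congr rfl fun s _ => hmarg s

lemma participation_nonneg (F : (Fin (n + 2) → S) → ℝ) (hF : ∀ t, 0 ≤ F t) (σ : S → Bool) :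
    0 ≤ participation F σ :=
  Finset.sum_nonneg fun s _ => marg_nonneg F hF s

lemma participation_le_one (F : (Fin (n + 2) → S) → ℝ) (hF : IsPMF F) (σ : S → Bool) :
    participation F σ ≤ 1 := by
  rw [participation_eq, ← sum_marg F hF]
  exact Finset.sum_le_sum_of_subset_of_nonneg (Finset.subset_univ _)
    (fun s _ _ => marg_nonneg F hF.1 s)

lemma mem_eqFinset {G : AffineGame S} {F : (Fin (n + 2) → S) → ℝ} {σ : S → Bool} :
    σ ∈ eqFinset G F ↔ IsEquilibrium G F σ := by
  simp [eqFinset]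

lemma le_maxP {G : AffineGame S} {F : (Fin (n + 2) → S) → ℝ} {σ : S → Bool}
    (hσ : IsEquilibrium G F σ) : participation F σ ≤ maxP G F := by
  have hmem : σ ∈ eqFinset G F := mem_eqFinset.2 hσ
  rw [maxP, dif_pos ⟨σ, hmem⟩]
  exact Finset.le_max' _ _ (Finset.mem_image_of_mem _ hmem)

lemma minP_le {G : AffineGame S} {F : (Fin (n + 2) → S) → ℝ} {σ : S → Bool}
    (hσ : IsEquilibrium G F σ) : minP G F ≤ participation F σ := by
  have hmem : σ ∈ eqFinset G F := mem_eqFinset.2 hσ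
  rw [minP, dif_pos ⟨σ, hmem⟩]
  exact Finset.min'_le _ _ (Finset.mem_image_of_mem _ hmem)

lemma maxP_nonneg {G : AffineGame S} {F : (Fin (n + 2) → S) → ℝ} (hF : ∀ t, 0 ≤ F t) :
    0 ≤ maxP G F := by
  rw [maxP]
  split
  · next h =>
    obtain ⟨σ, hσ, hval⟩ := Finset.mem_image.1 (Finset.max'_mem ((eqFinset G F).image (participation F)) (h.image _))
    rw [← hval]
    exact participation_nonneg F hF σ
  · exact le_refl 0

lemma minP_le_one {G : AffineGame S} {F : (Fin (n + 2) → S) → ℝ} (hF : IsPMF F) :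
    minP G F ≤ 1 := by
  rw [minP]
  split
  · next h =>
    obtain ⟨σ, hσ, hval⟩ := Finset.mem_image.1 (Finset.min'_mem ((eqFinset G F).image (participation F)) (h.image _))
    rw [← hval]
    exact participation_le_one F hF σ
  · exact le_refl 1

lemma maxP_mono {G : AffineGame S} {F Q : (Fin (n + 2) → S) → ℝ}
    (hF : ∀ t, 0 ≤ F t) (hmarg : ∀ s, marg F s = marg Q s)
    (hsub : ∀ σ, IsEquilibrium G Q σ → IsEquilibrium G F σ) :
    maxP G Q ≤ maxP G F := by
  by_cases hQ : (eqFinset G Q).Nonempty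
  · rw [maxP, dif_pos hQ]
    apply Finset.max'_le
    intro y hy
    obtain ⟨σ, hσ, rfl⟩ := Finset.mem_image.1 hy
    rw [← participation_congr F Q hmarg σ]
    exact le_maxP (hsub σ (mem_eqFinset.1 hσ))
  · rw [maxP, dif_neg hQ]
    exact maxP_nonneg hF

lemma minP_mono {G : AffineGame S} {F Q : (Fin (n + 2) → S) → ℝ}
    (hF : IsPMF F) (hmarg : ∀ s, marg F s = marg Q s)
    (hsub : ∀ σ, IsEquilibrium G Q σ → IsEquilibrium G F σ) :
    minP G F ≤ minP G Q := by
  by_cases hQ : (eqFinset G Q).Nonempty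
  · conv_rhs => rw [minP, dif_pos hQ]
    apply Finset.le_min'
    intro y hy
    obtain ⟨σ, hσ, rfl⟩ := Finset.mem_image.1 hy
    rw [← participation_congr F Q hmarg σ]
    exact minP_le (hsub σ (mem_eqFinset.1 hσ))
  · conv_rhs => rw [minP, dif_neg hQ]
    exact minP_le_one hF

lemma eqFinset_singleton {G : AffineGame S} {F : (Fin (n + 2) → S) → ℝ} {σ0 : S → Bool}
    (h1 : IsEquilibrium G F σ0) (h2 : ∀ σ, IsEquilibrium G F σ → σ = σ0) :
    eqFinset G F = {σ0} := by
  ext σ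
  rw [mem_eqFinset, Finset.mem_singleton]
  exact ⟨fun h => h2 σ h, fun h => h ▸ h1⟩

lemma maxP_singleton {G : AffineGame S} {F : (Fin (n + 2) → S) → ℝ} {σ0 : S → Bool}
    (h : eqFinset G F = {σ0}) : maxP G F = participation F σ0 := by
  have hne : (eqFinset G F).Nonempty := h ▸ Finset.singleton_nonempty σ0
  rw [maxP, dif_pos hne]
  simp [h]

lemma minP_singleton {G : AffineGame S} {F : (Fin (n + 2) → S) → ℝ} {σ0 : S → Bool}
    (h : eqFinset G F = {σ0}) : minP G F = participation F σ0 := by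
  have hne : (eqFinset G F).Nonempty := h ▸ Finset.singleton_nonempty σ0
  rw [minP, dif_pos hne]
  simp [h]

end Aux4

section Aux5

variable {n : ℕ} {S : Type*} [Fintype S] [DecidableEq S]

/-- The coordination game used in the converse constructions: payoff slope `1` at `s0`,
constant payoff `a s` elsewhere. -/
noncomputable def cGame (s0 : S) (c : ℝ) (a : S → ℝ) : AffineGame S where
  α := fun s => if s = s0 then c else a s
  β := fun s => if s = s0 then 1 else 0
  k := 1
  l := 0
  hβ := fun s => by split <;> norm_num
  hk := one_pos

lemma U_cGame_ne (F : (Fin (n + 2) → S) → ℝ) (hFex : Exchangeable F)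
    (hpos : ∀ s, 0 < marg F s) (s0 : S) (c : ℝ) (a : S → ℝ) (σ : S → Bool)
    {s : S} (hs : s ≠ s0) : U (cGame s0 c a) F σ s = a s := by
  rw [U_eq (cGame s0 c a) F hFex σ s (hpos s)]
  simp [cGame, hs]

lemma U_cGame_self (F : (Fin (n + 2) → S) → ℝ) (hFex : Exchangeable F)
    (hpos : ∀ s, 0 < marg F s) (s0 : S) (c : ℝ) (a : S → ℝ) (σ : S → Bool) :
    U (cGame s0 c a) F σ s0 = c + ((n : ℝ) + 1) * condProb F s0 (Pset σ) := by
  rw [U_eq (cGame s0 c a) F hFex σ s0 (hpos s0)]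
  simp [cGame]

lemma condProb_empty (F : (Fin (n + 2) → S) → ℝ) (s : S) : condProb F s ∅ = 0 := by
  rw [condProb_def]
  unfold condNum
  simp

lemma Pset_false : Pset (fun _ : S => false) = ∅ := by
  simp [Pset]

lemma Pset_true : Pset (fun _ : S => true) = univ := by
  simp [Pset]

lemma sum_marg_compl (F : (Fin (n + 2) → S) → ℝ) (hF : IsPMF F) (K : Finset S) :
    ∑ s ∈ Kᶜ, marg F s = 1 - ∑ s ∈ K, marg F s := by
  have := Finset.sum_add_sum_compl K (marg F)
  rw [sum_marg F hF] at this
  linarith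

end Aux5

section Aux6

variable {n : ℕ} {S : Type*} [Fintype S] [DecidableEq S]

lemma condProb_le_one (F : (Fin (n + 2) → S) → ℝ) (hF : ∀ t, 0 ≤ F t) {s : S}
    (hpos : 0 < marg F s) (K : Finset S) : condProb F s K ≤ 1 := by
  rw [condProb_compl F s hpos]
  have := condProb_nonneg F hF s Kᶜ
  linarith

lemma condProb_compl' (F : (Fin (n + 2) → S) → ℝ) {s : S}
    (hpos : 0 < marg F s) (K : Finset S) : condProb F s Kᶜ = 1 - condProb F s K := by
  rw [condProb_compl F s hpos Kᶜ, compl_compl]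

lemma condProb_pair (F : (Fin (n + 2) → S) → ℝ) (s : S) {s0 s1 : S} (hne : s0 ≠ s1) :
    condProb F s {s0, s1} = condProb F s {s0} + condProb F s {s1} := by
  rw [condProb_split, Finset.sum_pair hne]

lemma incl_imp_cad (F Q : (Fin (n + 2) → S) → ℝ)
    (hFex : Exchangeable F) (hQex : Exchangeable Q)
    (hmarg : ∀ s, marg F s = marg Q s) (hpos : ∀ s, 0 < marg F s)
    (hincl : ∀ (G : AffineGame S) (σ : S → Bool), IsEquilibrium G Q σ → IsEquilibrium G F σ) :
    CAD F Q := by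
  have hposQ : ∀ s, 0 < marg Q s := fun s => hmarg s ▸ hpos s
  have hn : (0 : ℝ) < (n : ℝ) + 1 := by positivity
  refine ⟨hmarg, fun s0 => ?_⟩
  constructor
  · by_contra hlt
    push_neg at hlt
    set f := condProb F s0 {s0} with hfdef
    set q := condProb Q s0 {s0} with hqdef
    have hP : Pset (fun s : S => decide (s = s0)) = {s0} := by
      ext s; simp [Pset]
    have hQeq : IsEquilibrium (cGame s0 (-(((n : ℝ) + 1) * q)) (fun _ => (0 : ℝ))) Q
        (fun s => decide (s = s0)) := by
      intro s
      by_cases hs : s = s0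
      · refine ⟨fun _ => ?_, fun h => by simp [hs] at h⟩
        rw [hs, U_cGame_self Q hQex hposQ s0 _ _ _, hP, ← hqdef]
        linarith
      · exact ⟨fun _ => by rw [U_cGame_ne Q hQex hposQ s0 _ _ _ hs],
          fun _ => by rw [U_cGame_ne Q hQex hposQ s0 _ _ _ hs]⟩
    have hFeq := hincl _ _ hQeq
    have h1 := (hFeq s0).1 (by simp)
    rw [U_cGame_self F hFex hpos s0 _ _ _, hP, ← hfdef] at h1
    nlinarith [mul_pos hn (sub_pos.2 hlt)]
  · intro s1 hne
    by_contra hlt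
    push_neg at hlt
    set f := condProb F s0 {s1} with hfdef
    set q := condProb Q s0 {s1} with hqdef
    have hP : Pset (fun s : S => decide (s = s1)) = {s1} := by
      ext s; simp [Pset]
    have hQeq : IsEquilibrium (cGame s0 (-(((n : ℝ) + 1) * q)) (fun _ => (0 : ℝ))) Q
        (fun s => decide (s = s1)) := by
      intro s
      by_cases hs : s = s0
      · refine ⟨fun h => ?_, fun _ => ?_⟩
        · exfalso
          rw [hs] at h
          simp at h
          exact hne h.symm
        · rw [hs, U_cGame_self Q hQex hposQ s0 _ _ _, hP, ← hqdef]
          linarith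
      · exact ⟨fun _ => by rw [U_cGame_ne Q hQex hposQ s0 _ _ _ hs],
          fun _ => by rw [U_cGame_ne Q hQex hposQ s0 _ _ _ hs]⟩
    have hFeq := hincl _ _ hQeq
    have h1 := (hFeq s0).2 (by simp [Ne.symm hne])
    rw [U_cGame_self F hFex hpos s0 _ _ _, hP, ← hfdef] at h1
    nlinarith [mul_pos hn (sub_pos.2 hlt)]

end Aux6

section Aux7

variable {n : ℕ} {S : Type*} [Fintype S] [DecidableEq S]

lemma maxP_case_A (F Q : (Fin (n + 2) → S) → ℝ)
    (hFpmf : IsPMF F) (hQpmf : IsPMF Q)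
    (hFex : Exchangeable F) (hQex : Exchangeable Q)
    (hmarg : ∀ s, marg F s = marg Q s) (hpos : ∀ s, 0 < marg F s)
    (s0 : S) (hlt : condProb F s0 {s0} < condProb Q s0 {s0}) :
    ∃ G : AffineGame S, maxP G F < maxP G Q := by
  have hposQ : ∀ s, 0 < marg Q s := fun s => hmarg s ▸ hpos s
  have hn : (0 : ℝ) < (n : ℝ) + 1 := by positivity
  set f := condProb F s0 {s0} with hfdef
  set q := condProb Q s0 {s0} with hqdef
  have hf0 : 0 ≤ f := condProb_nonneg F hFpmf.1 s0 {s0}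
  set c : ℝ := (f + q) / 2 with hcdef
  have hfc : f < c := by rw [hcdef]; linarith
  have hcq : c < q := by rw [hcdef]; linarith
  have hc0 : 0 < c := by linarith
  refine ⟨cGame s0 (-(((n : ℝ) + 1) * c)) (fun _ => (-1 : ℝ)), ?_⟩
  -- the unique equilibrium of F is the all-false strategy
  have hFeq0 : IsEquilibrium (cGame s0 (-(((n : ℝ) + 1) * c)) (fun _ => (-1 : ℝ))) F
      (fun _ => false) := by
    intro s
    refine ⟨fun h => by simp at h, fun _ => ?_⟩
    by_cases hs : s = s0
    · rw [hs, U_cGame_self F hFex hpos s0 _ _ _, Pset_false, condProb_empty]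
      nlinarith
    · rw [U_cGame_ne F hFex hpos s0 _ _ _ hs]
      norm_num
  have huniq : ∀ σ, IsEquilibrium (cGame s0 (-(((n : ℝ) + 1) * c)) (fun _ => (-1 : ℝ))) F σ →
      σ = (fun _ => false) := by
    intro σ hσ
    have hoff : ∀ s, s ≠ s0 → σ s = false := by
      intro s hs
      cases hb : σ s with
      | false => rfl
      | true =>
        have h1 := (hσ s).1 hb
        rw [U_cGame_ne F hFex hpos s0 _ _ _ hs] at h1
        norm_num at h1
    have hs0 : σ s0 = false := by
      cases hb : σ s0 with
      | false => rfl
      | true =>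
        exfalso
        have hP : Pset σ = {s0} := by
          ext s
          simp only [Pset, Finset.mem_filter, Finset.mem_univ, true_and, Finset.mem_singleton]
          constructor
          · intro h
            by_contra hne
            rw [hoff s hne] at h
            simp at h
          · rintro rfl
            exact hb
        have h1 := (hσ s0).1 hb
        rw [U_cGame_self F hFex hpos s0 _ _ _, hP, ← hfdef] at h1
        nlinarith [mul_pos hn (sub_pos.2 hfc)]
    funext s
    by_cases hs : s = s0
    · rw [hs]; exact hs0
    · exact hoff s hs
  have hmaxF : maxP (cGame s0 (-(((n : ℝ) + 1) * c)) (fun _ => (-1 : ℝ))) F = 0 := by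
    rw [maxP_singleton (eqFinset_singleton hFeq0 huniq), participation_eq, Pset_false,
      Finset.sum_empty]
  -- the strategy acting only at s0 is an equilibrium of Q
  have hP1 : Pset (fun s : S => decide (s = s0)) = {s0} := by
    ext s; simp [Pset]
  have hQeq : IsEquilibrium (cGame s0 (-(((n : ℝ) + 1) * c)) (fun _ => (-1 : ℝ))) Q
      (fun s => decide (s = s0)) := by
    intro s
    by_cases hs : s = s0
    · refine ⟨fun _ => ?_, fun h => by simp [hs] at h⟩
      rw [hs, U_cGame_self Q hQex hposQ s0 _ _ _, hP1, ← hqdef]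
      nlinarith [mul_pos hn (sub_pos.2 hcq)]
    · refine ⟨fun h => by simp [hs] at h, fun _ => ?_⟩
      rw [U_cGame_ne Q hQex hposQ s0 _ _ _ hs]
      norm_num
  have hpart : participation Q (fun s : S => decide (s = s0)) = marg Q s0 := by
    rw [participation_eq, hP1, Finset.sum_singleton]
  rw [hmaxF]
  calc (0 : ℝ) < marg Q s0 := hposQ s0
    _ = participation Q (fun s : S => decide (s = s0)) := hpart.symm
    _ ≤ maxP _ Q := le_maxP hQeq

end Aux7

section Aux8

variable {n : ℕ} {S : Type*} [Fintype S] [DecidableEq S]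

lemma maxP_case_B (F Q : (Fin (n + 2) → S) → ℝ)
    (hFpmf : IsPMF F) (hQpmf : IsPMF Q)
    (hFex : Exchangeable F) (hQex : Exchangeable Q)
    (hmarg : ∀ s, marg F s = marg Q s) (hpos : ∀ s, 0 < marg F s)
    (s0 s1 : S) (hne : s1 ≠ s0) (hlt : condProb Q s0 {s1} < condProb F s0 {s1}) :
    ∃ G : AffineGame S, maxP G F < maxP G Q := by
  have hposQ : ∀ s, 0 < marg Q s := fun s => hmarg s ▸ hpos s
  have hn : (0 : ℝ) < (n : ℝ) + 1 := by positivity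
  set f := condProb F s0 {s1} with hfdef
  set q := condProb Q s0 {s1} with hqdef
  have hq0 : 0 ≤ q := condProb_nonneg Q hQpmf.1 s0 {s1}
  have hcp0 : 0 ≤ condProb F s0 {s0} := condProb_nonneg F hFpmf.1 s0 {s0}
  set c : ℝ := 1 - (f + q) / 2 with hcdef
  have h1fc : 1 - f < c := by rw [hcdef]; linarith
  have hc1q : c < 1 - q := by rw [hcdef]; linarith
  set a : S → ℝ := fun s => if s = s1 then -1 else 1 with hadef
  refine ⟨cGame s0 (-(((n : ℝ) + 1) * c)) a, ?_⟩
  set σF : S → Bool := fun s => decide (¬(s = s0 ∨ s = s1)) with hσFdef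
  have hPF : Pset σF = ({s0, s1} : Finset S)ᶜ := by
    ext s
    simp [Pset, σF]
  have hcpF : condProb F s0 (({s0, s1} : Finset S)ᶜ)
      = 1 - (condProb F s0 {s0} + f) := by
    rw [condProb_compl' F (hpos s0), condProb_pair F s0 (Ne.symm hne), hfdef]
  -- σF is an equilibrium of F
  have hFeq0 : IsEquilibrium (cGame s0 (-(((n : ℝ) + 1) * c)) a) F σF := by
    intro s
    by_cases hs0 : s = s0
    · refine ⟨fun h => ?_, fun _ => ?_⟩
      · exfalso; rw [hs0] at h; simp [σF] at h
      · rw [hs0, U_cGame_self F hFex hpos s0 _ _ _, hPF, hcpF]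
        nlinarith [mul_nonneg hn.le (show (0:ℝ) ≤ c - (1 - (condProb F s0 {s0} + f)) by linarith)]
    · by_cases hs1 : s = s1
      · refine ⟨fun h => ?_, fun _ => ?_⟩
        · exfalso; rw [hs1] at h; simp [σF] at h
        · rw [U_cGame_ne F hFex hpos s0 _ _ _ hs0, hadef]
          simp [hs1]
      · refine ⟨fun _ => ?_, fun h => ?_⟩
        · rw [U_cGame_ne F hFex hpos s0 _ _ _ hs0, hadef]
          simp [hs1]
        · exfalso; simp [σF, hs0, hs1] at h
  -- every equilibrium of F equals σF
  have huniq : ∀ σ, IsEquilibrium (cGame s0 (-(((n : ℝ) + 1) * c)) a) F σ → σ = σF := by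
    intro σ hσ
    have hoff : ∀ s, s ≠ s0 → s ≠ s1 → σ s = true := by
      intro s h0 h1
      cases hb : σ s with
      | true => rfl
      | false =>
        have h2 := (hσ s).2 hb
        rw [U_cGame_ne F hFex hpos s0 _ _ _ h0, hadef] at h2
        simp [h1] at h2
        linarith
    have hs1f : σ s1 = false := by
      cases hb : σ s1 with
      | false => rfl
      | true =>
        have h2 := (hσ s1).1 hb
        rw [U_cGame_ne F hFex hpos s0 _ _ _ hne, hadef] at h2
        simp at h2
        linarith
    have hs0f : σ s0 = false := by
      cases hb : σ s0 with
      | false => rfl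
      | true =>
        exfalso
        have hP : Pset σ = ({s1} : Finset S)ᶜ := by
          ext s
          simp only [Pset, Finset.mem_filter, Finset.mem_univ, true_and, Finset.mem_compl,
            Finset.mem_singleton]
          constructor
          · intro h
            rintro rfl
            rw [hs1f] at h
            simp at h
          · intro h
            by_cases h0 : s = s0
            · rw [h0]; exact hb
            · exact hoff s h0 h
        have h1 := (hσ s0).1 hb
        rw [U_cGame_self F hFex hpos s0 _ _ _, hP,
          condProb_compl' F (hpos s0), ← hfdef] at h1
        nlinarith [mul_pos hn (sub_pos.2 h1fc)]
    funext s
    by_cases h0 : s = s0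
    · rw [h0, hs0f]; simp [σF]
    · by_cases h1 : s = s1
      · rw [h1, hs1f]; simp [σF]
      · rw [hoff s h0 h1]; simp [σF, h0, h1]
  have hmaxF : maxP (cGame s0 (-(((n : ℝ) + 1) * c)) a) F
      = 1 - (marg F s0 + marg F s1) := by
    rw [maxP_singleton (eqFinset_singleton hFeq0 huniq), participation_eq, hPF,
      sum_marg_compl F hFpmf, Finset.sum_pair (Ne.symm hne)]
  -- the strategy acting everywhere except s1 is an equilibrium of Q
  set σQ : S → Bool := fun s => decide (¬ s = s1) with hσQdef
  have hPQ : Pset σQ = ({s1} : Finset S)ᶜ := by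
    ext s
    simp [Pset, σQ]
  have hQeq : IsEquilibrium (cGame s0 (-(((n : ℝ) + 1) * c)) a) Q σQ := by
    intro s
    by_cases hs0 : s = s0
    · refine ⟨fun _ => ?_, fun h => ?_⟩
      · rw [hs0, U_cGame_self Q hQex hposQ s0 _ _ _, hPQ,
          condProb_compl' Q (hposQ s0), ← hqdef]
        nlinarith [mul_pos hn (sub_pos.2 hc1q)]
      · exfalso; rw [hs0] at h; simp [σQ, Ne.symm hne] at h
    · by_cases hs1 : s = s1
      · refine ⟨fun h => ?_, fun _ => ?_⟩
        · exfalso; rw [hs1] at h; simp [σQ] at h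
        · rw [U_cGame_ne Q hQex hposQ s0 _ _ _ hs0, hadef]
          simp [hs1]
      · refine ⟨fun _ => ?_, fun h => ?_⟩
        · rw [U_cGame_ne Q hQex hposQ s0 _ _ _ hs0, hadef]
          simp [hs1]
        · exfalso; simp [σQ, hs1] at h
  have hpart : participation Q σQ = 1 - marg Q s1 := by
    rw [participation_eq, hPQ, sum_marg_compl Q hQpmf, Finset.sum_singleton]
  rw [hmaxF]
  calc 1 - (marg F s0 + marg F s1) < 1 - marg F s1 := by
        have := hpos s0; linarith
    _ = 1 - marg Q s1 := by rw [hmarg s1]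
    _ = participation Q σQ := hpart.symm
    _ ≤ maxP _ Q := le_maxP hQeq

end Aux8

section Aux9

variable {n : ℕ} {S : Type*} [Fintype S] [DecidableEq S]

lemma minP_case_A (F Q : (Fin (n + 2) → S) → ℝ)
    (hFpmf : IsPMF F) (hQpmf : IsPMF Q)
    (hFex : Exchangeable F) (hQex : Exchangeable Q)
    (hmarg : ∀ s, marg F s = marg Q s) (hpos : ∀ s, 0 < marg F s)
    (s0 : S) (hlt : condProb F s0 {s0} < condProb Q s0 {s0}) :
    ∃ G : AffineGame S, minP G Q < minP G F := by
  have hposQ : ∀ s, 0 < marg Q s := fun s => hmarg s ▸ hpos s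
  have hn : (0 : ℝ) < (n : ℝ) + 1 := by positivity
  set f := condProb F s0 {s0} with hfdef
  set q := condProb Q s0 {s0} with hqdef
  have hf0 : 0 ≤ f := condProb_nonneg F hFpmf.1 s0 {s0}
  have hq0 : 0 ≤ q := condProb_nonneg Q hQpmf.1 s0 {s0}
  set c : ℝ := 1 - (f + q) / 2 with hcdef
  have h1qc : 1 - q < c := by rw [hcdef]; linarith
  have hc1f : c < 1 - f := by rw [hcdef]; linarith
  have hc1 : c ≤ 1 := by rw [hcdef]; linarith
  set a : S → ℝ := fun _ => (1 : ℝ) with hadef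
  refine ⟨cGame s0 (-(((n : ℝ) + 1) * c)) a, ?_⟩
  -- the all-true strategy is an equilibrium of F
  have hFeq0 : IsEquilibrium (cGame s0 (-(((n : ℝ) + 1) * c)) a) F (fun _ => true) := by
    intro s
    refine ⟨fun _ => ?_, fun h => by simp at h⟩
    by_cases hs : s = s0
    · rw [hs, U_cGame_self F hFex hpos s0 _ _ _, Pset_true, condProb_univ F s0 (hpos s0)]
      nlinarith [mul_nonneg hn.le (show (0:ℝ) ≤ 1 - c by linarith)]
    · rw [U_cGame_ne F hFex hpos s0 _ _ _ hs, hadef]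
      norm_num
  have huniq : ∀ σ, IsEquilibrium (cGame s0 (-(((n : ℝ) + 1) * c)) a) F σ →
      σ = (fun _ => true) := by
    intro σ hσ
    have hoff : ∀ s, s ≠ s0 → σ s = true := by
      intro s hs
      cases hb : σ s with
      | true => rfl
      | false =>
        have h2 := (hσ s).2 hb
        rw [U_cGame_ne F hFex hpos s0 _ _ _ hs, hadef] at h2
        norm_num at h2
    have hs0 : σ s0 = true := by
      cases hb : σ s0 with
      | true => rfl
      | false =>
        exfalso
        have hP : Pset σ = ({s0} : Finset S)ᶜ := by
          ext s
          simp only [Pset, Finset.mem_filter, Finset.mem_univ, true_and, Finset.mem_compl,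
            Finset.mem_singleton]
          constructor
          · intro h
            rintro rfl
            rw [hb] at h
            simp at h
          · intro h
            exact hoff s h
        have h2 := (hσ s0).2 hb
        rw [U_cGame_self F hFex hpos s0 _ _ _, hP, condProb_compl' F (hpos s0), ← hfdef] at h2
        nlinarith [mul_pos hn (sub_pos.2 hc1f)]
    funext s
    by_cases hs : s = s0
    · rw [hs]; exact hs0
    · exact hoff s hs
  have hminF : minP (cGame s0 (-(((n : ℝ) + 1) * c)) a) F = 1 := by
    rw [minP_singleton (eqFinset_singleton hFeq0 huniq), participation_eq, Pset_true,
      sum_marg F hFpmf]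
  -- the strategy acting everywhere except s0 is an equilibrium of Q
  set σQ : S → Bool := fun s => decide (¬ s = s0) with hσQdef
  have hPQ : Pset σQ = ({s0} : Finset S)ᶜ := by
    ext s
    simp [Pset, σQ]
  have hQeq : IsEquilibrium (cGame s0 (-(((n : ℝ) + 1) * c)) a) Q σQ := by
    intro s
    by_cases hs : s = s0
    · refine ⟨fun h => ?_, fun _ => ?_⟩
      · exfalso; rw [hs] at h; simp [σQ] at h
      · rw [hs, U_cGame_self Q hQex hposQ s0 _ _ _, hPQ,
          condProb_compl' Q (hposQ s0), ← hqdef]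
        nlinarith [mul_pos hn (sub_pos.2 h1qc)]
    · refine ⟨fun _ => ?_, fun h => ?_⟩
      · rw [U_cGame_ne Q hQex hposQ s0 _ _ _ hs, hadef]
        norm_num
      · exfalso; simp [σQ, hs] at h
  have hpart : participation Q σQ = 1 - marg Q s0 := by
    rw [participation_eq, hPQ, sum_marg_compl Q hQpmf, Finset.sum_singleton]
  rw [hminF]
  calc minP _ Q ≤ participation Q σQ := minP_le hQeq
    _ = 1 - marg Q s0 := hpart
    _ < 1 := by have := hposQ s0; linarith

lemma minP_case_B (F Q : (Fin (n + 2) → S) → ℝ)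
    (hFpmf : IsPMF F) (hQpmf : IsPMF Q)
    (hFex : Exchangeable F) (hQex : Exchangeable Q)
    (hmarg : ∀ s, marg F s = marg Q s) (hpos : ∀ s, 0 < marg F s)
    (s0 s1 : S) (hne : s1 ≠ s0) (hlt : condProb Q s0 {s1} < condProb F s0 {s1}) :
    ∃ G : AffineGame S, minP G Q < minP G F := by
  have hposQ : ∀ s, 0 < marg Q s := fun s => hmarg s ▸ hpos s
  have hn : (0 : ℝ) < (n : ℝ) + 1 := by positivity
  set f := condProb F s0 {s1} with hfdef
  set q := condProb Q s0 {s1} with hqdef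
  have hq0 : 0 ≤ q := condProb_nonneg Q hQpmf.1 s0 {s1}
  have hcp0 : 0 ≤ condProb F s0 {s0} := condProb_nonneg F hFpmf.1 s0 {s0}
  set c : ℝ := (f + q) / 2 with hcdef
  have hqc : q < c := by rw [hcdef]; linarith
  have hcf : c < f := by rw [hcdef]; linarith
  set a : S → ℝ := fun s => if s = s1 then 1 else -1 with hadef
  refine ⟨cGame s0 (-(((n : ℝ) + 1) * c)) a, ?_⟩
  set σF : S → Bool := fun s => decide (s = s0 ∨ s = s1) with hσFdef
  have hPF : Pset σF = ({s0, s1} : Finset S) := by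
    ext s
    simp [Pset, σF]
  have hcpF : condProb F s0 ({s0, s1} : Finset S) = condProb F s0 {s0} + f := by
    rw [condProb_pair F s0 (Ne.symm hne), hfdef]
  have hFeq0 : IsEquilibrium (cGame s0 (-(((n : ℝ) + 1) * c)) a) F σF := by
    intro s
    by_cases hs0 : s = s0
    · refine ⟨fun _ => ?_, fun h => ?_⟩
      · rw [hs0, U_cGame_self F hFex hpos s0 _ _ _, hPF, hcpF]
        nlinarith [mul_nonneg hn.le (show (0:ℝ) ≤ condProb F s0 {s0} + f - c by linarith)]
      · exfalso; rw [hs0] at h; simp [σF] at h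
    · by_cases hs1 : s = s1
      · refine ⟨fun _ => ?_, fun h => ?_⟩
        · rw [U_cGame_ne F hFex hpos s0 _ _ _ hs0, hadef]
          simp [hs1]
        · exfalso; rw [hs1] at h; simp [σF] at h
      · refine ⟨fun h => ?_, fun _ => ?_⟩
        · exfalso; simp [σF, hs0, hs1] at h
        · rw [U_cGame_ne F hFex hpos s0 _ _ _ hs0, hadef]
          simp [hs1]
  have huniq : ∀ σ, IsEquilibrium (cGame s0 (-(((n : ℝ) + 1) * c)) a) F σ → σ = σF := by
    intro σ hσ
    have hoff : ∀ s, s ≠ s0 → s ≠ s1 → σ s = false := by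
      intro s h0 h1
      cases hb : σ s with
      | false => rfl
      | true =>
        have h2 := (hσ s).1 hb
        rw [U_cGame_ne F hFex hpos s0 _ _ _ h0, hadef] at h2
        simp [h1] at h2
        linarith
    have hs1t : σ s1 = true := by
      cases hb : σ s1 with
      | true => rfl
      | false =>
        have h2 := (hσ s1).2 hb
        rw [U_cGame_ne F hFex hpos s0 _ _ _ hne, hadef] at h2
        simp at h2
        linarith
    have hs0t : σ s0 = true := by
      cases hb : σ s0 with
      | true => rfl
      | false =>
        exfalso
        have hP : Pset σ = ({s1} : Finset S) := by
          ext s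
          simp only [Pset, Finset.mem_filter, Finset.mem_univ, true_and, Finset.mem_singleton]
          constructor
          · intro h
            by_contra h1
            by_cases h0 : s = s0
            · rw [h0, hb] at h; simp at h
            · rw [hoff s h0 h1] at h; simp at h
          · rintro rfl
            exact hs1t
        have h2 := (hσ s0).2 hb
        rw [U_cGame_self F hFex hpos s0 _ _ _, hP, ← hfdef] at h2
        nlinarith [mul_pos hn (sub_pos.2 hcf)]
    funext s
    by_cases h0 : s = s0
    · rw [h0, hs0t]; simp [σF]
    · by_cases h1 : s = s1
      · rw [h1, hs1t]; simp [σF]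
      · rw [hoff s h0 h1]; simp [σF, h0, h1]
  have hminF : minP (cGame s0 (-(((n : ℝ) + 1) * c)) a) F = marg F s0 + marg F s1 := by
    rw [minP_singleton (eqFinset_singleton hFeq0 huniq), participation_eq, hPF,
      Finset.sum_pair (Ne.symm hne)]
  set σQ : S → Bool := fun s => decide (s = s1) with hσQdef
  have hPQ : Pset σQ = ({s1} : Finset S) := by
    ext s
    simp [Pset, σQ]
  have hQeq : IsEquilibrium (cGame s0 (-(((n : ℝ) + 1) * c)) a) Q σQ := by
    intro s
    by_cases hs0 : s = s0
    · refine ⟨fun h => ?_, fun _ => ?_⟩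
      · exfalso; rw [hs0] at h; simp [σQ, Ne.symm hne] at h
      · rw [hs0, U_cGame_self Q hQex hposQ s0 _ _ _, hPQ, ← hqdef]
        nlinarith [mul_pos hn (sub_pos.2 hqc)]
    · by_cases hs1 : s = s1
      · refine ⟨fun _ => ?_, fun h => ?_⟩
        · rw [U_cGame_ne Q hQex hposQ s0 _ _ _ hs0, hadef]
          simp [hs1]
        · exfalso; rw [hs1] at h; simp [σQ] at h
      · refine ⟨fun h => ?_, fun _ => ?_⟩
        · exfalso; simp [σQ, hs1] at h
        · rw [U_cGame_ne Q hQex hposQ s0 _ _ _ hs0, hadef]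
          simp [hs1]
  have hpart : participation Q σQ = marg Q s1 := by
    rw [participation_eq, hPQ, Finset.sum_singleton]
  rw [hminF]
  calc minP _ Q ≤ participation Q σQ := minP_le hQeq
    _ = marg Q s1 := hpart
    _ < marg F s0 + marg F s1 := by
        have := hpos s0
        have := hmarg s1
        linarith

end Aux9

section Aux10

variable {n : ℕ} {S : Type*} [Fintype S] [DecidableEq S]

lemma not_cad_cases (F Q : (Fin (n + 2) → S) → ℝ) (hmarg : ∀ s, marg F s = marg Q s)
    (h : ¬ CAD F Q) :
    ∃ s0 : S, condProb F s0 {s0} < condProb Q s0 {s0} ∨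
      ∃ s1, s1 ≠ s0 ∧ condProb Q s0 {s1} < condProb F s0 {s1} := by
  by_contra hc
  push_neg at hc
  exact h ⟨hmarg, fun s0 => ⟨(hc s0).1, fun s' hs' => (hc s0).2 s' hs'⟩⟩

end Aux10

/-- equivalence between CAD and (2) equilibrium-set inclusion,
(3) maximal participation comparison, (4) minimal participation comparison,
over all affine private-value coordination games. -/
theorem cad_coordination_equivalence {n : ℕ} {S : Type*} [Fintype S] [DecidableEq S] [Nonempty S]
    (F Q : (Fin (n + 2) → S) → ℝ)
    (hFpmf : IsPMF F) (hQpmf : IsPMF Q)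
    (hFex : Exchangeable F) (hQex : Exchangeable Q)
    (hmarg : ∀ s, marg F s = marg Q s)
    (hpos : ∀ s, 0 < marg F s) :
    (CAD F Q ↔ ∀ (G : AffineGame S) (σ : S → Bool),
        IsEquilibrium G Q σ → IsEquilibrium G F σ)
    ∧ (CAD F Q ↔ ∀ G : AffineGame S, maxP G Q ≤ maxP G F)
    ∧ (CAD F Q ↔ ∀ G : AffineGame S, minP G F ≤ minP G Q) := by
  have himp : CAD F Q → ∀ (G : AffineGame S) (σ : S → Bool),
      IsEquilibrium G Q σ → IsEquilibrium G F σ :=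
    fun h G σ => cad_imp_incl F Q hFex hQex hpos h G σ
  refine ⟨⟨himp, fun h => incl_imp_cad F Q hFex hQex hmarg hpos h⟩, ⟨?_, ?_⟩, ?_, ?_⟩
  · intro h G
    exact maxP_mono hFpmf.1 hmarg (fun σ => himp h G σ)
  · intro h
    by_contra hnc
    obtain ⟨s0, hcase⟩ := not_cad_cases F Q hmarg hnc
    rcases hcase with hlt | ⟨s1, hne, hlt⟩
    · obtain ⟨G, hG⟩ := maxP_case_A F Q hFpmf hQpmf hFex hQex hmarg hpos s0 hlt
      exact absurd (h G) (not_le.2 hG)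
    · obtain ⟨G, hG⟩ := maxP_case_B F Q hFpmf hQpmf hFex hQex hmarg hpos s0 s1 hne hlt
      exact absurd (h G) (not_le.2 hG)
  · intro h G
    exact minP_mono hFpmf hmarg (fun σ => himp h G σ)
  · intro h
    by_contra hnc
    obtain ⟨s0, hcase⟩ := not_cad_cases F Q hmarg hnc
    rcases hcase with hlt | ⟨s1, hne, hlt⟩
    · obtain ⟨G, hG⟩ := minP_case_A F Q hFpmf hQpmf hFex hQex hmarg hpos s0 hlt
      exact absurd (h G) (not_le.2 hG)
    · obtain ⟨G, hG⟩ := minP_case_B F Q hFpmf hQpmf hFex hQex hmarg hpos s0 s1 hne hlt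
      exact absurd (h G) (not_le.2 hG)
end

section
/- Let S be a finite nonempty linearly ordered set and let F and Q be exchangeable probability mass functions on S × S with identical, strictly positive marginals. If F is cCAD-higher than Q, then F dominates Q in the supermodular order: for every supermodular function f : S × S → ℝ, Σ_{(a,b)} F(a,b)·f(a,b) ≥ Σ_{(a,b)} Q(a,b)·f(a,b). -/
open Finset

/-- Marginal of a two-player information structure on `S`. -/
noncomputable def marg2 {S : Type*} [Fintype S] (F : S → S → ℝ) (s : S) : ℝ :=
  ∑ b : S, F s b

/-- Conditional probability `F_s(K)`. -/
noncomputable def condProb2 {S : Type*} [Fintype S] (F : S → S → ℝ) (s : S) (K : Finset S) : ℝ :=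
  (∑ b ∈ K, F s b) / marg2 F s

def upSet {S : Type*} [Fintype S] [LinearOrder S] (shat : S) : Finset S :=
  univ.filter (fun y => shat ≤ y)

def downSet {S : Type*} [Fintype S] [LinearOrder S] (shat : S) : Finset S :=
  univ.filter (fun y => y ≤ shat)

/-- `F` is cCAD-higher than `Q` (two players). -/
def cCAD2 {S : Type*} [Fintype S] [LinearOrder S] (F Q : S → S → ℝ) : Prop :=
  (∀ s, marg2 F s = marg2 Q s) ∧
  ∀ s : S,
    (∀ shat : S, shat ≤ s → condProb2 F s (upSet shat) ≥ condProb2 Q s (upSet shat)) ∧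
    (∀ shat : S, s ≤ shat → condProb2 F s (downSet shat) ≥ condProb2 Q s (downSet shat))

/-- A supermodular function on `S × S`. -/
def Supermodular {S : Type*} [LinearOrder S] (f : S → S → ℝ) : Prop :=
  ∀ a b c d : S, f a b + f c d ≤ f (max a c) (max b d) + f (min a c) (min b d)

/-- Restrict a sum over `range i` to an `ite` over a larger `range m`. -/
lemma sum_range_restrict {m i : ℕ} (h : i ≤ m) (v : ℕ → ℝ) :
    ∑ k ∈ range i, v k = ∑ k ∈ range m, if k < i then v k else 0 := by
  rw [← Finset.sum_filter]
  congr 1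
  ext k
  simp only [mem_filter, mem_range]
  omega

/-- Swap the outer two and inner two sums of a fourfold sum. -/
lemma sum4_swap (R : Finset ℕ) (u : ℕ → ℕ → ℕ → ℕ → ℝ) :
    ∑ i ∈ R, ∑ j ∈ R, ∑ k ∈ R, ∑ l ∈ R, u i j k l
      = ∑ k ∈ R, ∑ l ∈ R, ∑ i ∈ R, ∑ j ∈ R, u i j k l := by
  calc ∑ i ∈ R, ∑ j ∈ R, ∑ k ∈ R, ∑ l ∈ R, u i j k l
      = ∑ i ∈ R, ∑ k ∈ R, ∑ j ∈ R, ∑ l ∈ R, u i j k l :=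
        Finset.sum_congr rfl fun i _ => Finset.sum_comm
    _ = ∑ k ∈ R, ∑ i ∈ R, ∑ j ∈ R, ∑ l ∈ R, u i j k l := Finset.sum_comm
    _ = ∑ k ∈ R, ∑ i ∈ R, ∑ l ∈ R, ∑ j ∈ R, u i j k l :=
        Finset.sum_congr rfl fun k _ => Finset.sum_congr rfl fun i _ => Finset.sum_comm
    _ = ∑ k ∈ R, ∑ l ∈ R, ∑ i ∈ R, ∑ j ∈ R, u i j k l :=
        Finset.sum_congr rfl fun k _ => Finset.sum_comm

/-- for two players, cCAD dominance implies supermodular-order dominance. -/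
theorem ccad_implies_supermodular {S : Type*} [Fintype S] [LinearOrder S] [Nonempty S]
    (F Q : S → S → ℝ)
    (hFnn : ∀ a b, 0 ≤ F a b) (hQnn : ∀ a b, 0 ≤ Q a b)
    (hFsum : ∑ a : S, ∑ b : S, F a b = 1) (hQsum : ∑ a : S, ∑ b : S, Q a b = 1)
    (hFex : ∀ a b, F a b = F b a) (hQex : ∀ a b, Q a b = Q b a)
    (hmarg : ∀ s, marg2 F s = marg2 Q s)
    (hpos : ∀ s, 0 < marg2 F s)
    (hcCAD : cCAD2 F Q) :
    ∀ f : S → S → ℝ, Supermodular f →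
      ∑ a : S, ∑ b : S, Q a b * f a b ≤ ∑ a : S, ∑ b : S, F a b * f a b := by
  intro f hf
  set D : S → S → ℝ := fun a b => F a b - Q a b with hD
  have hDsym : ∀ a b, D a b = D b a := by
    intro a b; simp only [hD]; rw [hFex a b, hQex a b]
  have hDrow : ∀ a, ∑ b : S, D a b = 0 := by
    intro a
    have hm := hmarg a
    simp only [marg2] at hm
    simp only [hD, Finset.sum_sub_distrib, hm, sub_self]
  -- rows dominate on up-sets
  have hrow_up : ∀ a s : S, s ≤ a → 0 ≤ ∑ b ∈ upSet s, D a b := by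
    intro a s hs
    have h1 := (hcCAD.2 a).1 s hs
    simp only [condProb2, ge_iff_le] at h1
    rw [← hmarg a] at h1
    rw [div_le_div_iff₀ (hpos a) (hpos a)] at h1
    have h2 : (∑ b ∈ upSet s, Q a b) ≤ ∑ b ∈ upSet s, F a b :=
      le_of_mul_le_mul_right h1 (hpos a)
    simp only [hD, Finset.sum_sub_distrib]
    linarith
  -- key positivity on products of up-sets
  have lemA0 : ∀ s t : S, t ≤ s → 0 ≤ ∑ a ∈ upSet s, ∑ b ∈ upSet t, D a b := by
    intro s t hts
    apply Finset.sum_nonneg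
    intro a ha
    have hsa : s ≤ a := by simpa [upSet] using ha
    exact hrow_up a t (le_trans hts hsa)
  have lemA : ∀ s t : S, 0 ≤ ∑ a ∈ upSet s, ∑ b ∈ upSet t, D a b := by
    intro s t
    rcases le_total t s with h | h
    · exact lemA0 s t h
    · have hswap : ∑ a ∈ upSet s, ∑ b ∈ upSet t, D a b
          = ∑ a ∈ upSet t, ∑ b ∈ upSet s, D a b := by
        rw [Finset.sum_comm]
        exact Finset.sum_congr rfl fun x _ => Finset.sum_congr rfl fun y _ => hDsym y x
      rw [hswap]; exact lemA0 t s h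
  -- transfer to ℕ via an order isomorphism with Fin n
  set n := Fintype.card S with hncard
  have hn0 : 0 < n := Fintype.card_pos
  set e : Fin n ≃o S := monoEquivOfFin S rfl with he
  set g : ℕ → S := fun i =>
    e ⟨min i (n - 1), Nat.lt_of_le_of_lt (Nat.min_le_right _ _) (by omega)⟩ with hg
  have hgmono : Monotone g := by
    intro i j hij
    simp only [hg]
    exact e.monotone (by simp only [Fin.mk_le_mk]; omega)
  have hg_le : ∀ i j : ℕ, i < n → j < n → (g i ≤ g j ↔ i ≤ j) := by
    intro i j hi hj
    simp only [hg]
    rw [e.le_iff_le]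
    simp only [Fin.mk_le_mk]
    omega
  have sumS : ∀ h : S → ℝ, ∑ a : S, h a = ∑ i ∈ range n, h (g i) := by
    intro h
    rw [Finset.sum_range (fun i => h (g i))]
    refine (Fintype.sum_equiv e.toEquiv _ _ ?_).symm
    intro i
    have : g i.val = e i := by
      simp only [hg]
      congr 1
      apply Fin.ext
      have := i.isLt
      simp only []
      omega
    rw [this]
    rfl
  set φ : ℕ → ℕ → ℝ := fun i j => f (g i) (g j) with hφ
  set Dn : ℕ → ℕ → ℝ := fun i j => D (g i) (g j) with hDn
  set C : ℕ → ℕ → ℝ := fun k l => φ (k+1) (l+1) - φ k (l+1) - φ (k+1) l + φ k l with hC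
  have hCpos : ∀ k l, 0 ≤ C k l := by
    intro k l
    have h1 : g k ≤ g (k+1) := hgmono (Nat.le_succ k)
    have h2 : g l ≤ g (l+1) := hgmono (Nat.le_succ l)
    have hsup := hf (g k) (g (l+1)) (g (k+1)) (g l)
    rw [max_eq_right h1, max_eq_left h2, min_eq_left h1, min_eq_right h2] at hsup
    simp only [hC, hφ]
    linarith
  have rowzero : ∀ i, ∑ j ∈ range n, Dn i j = 0 := by
    intro i
    have := sumS (fun b => D (g i) b)
    simp only [hDn]
    rw [← this]
    exact hDrow (g i)
  have colzero : ∀ j, ∑ i ∈ range n, Dn i j = 0 := by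
    intro j
    have : ∑ i ∈ range n, Dn i j = ∑ i ∈ range n, Dn j i :=
      Finset.sum_congr rfl fun i _ => by simp only [hDn]; exact hDsym (g i) (g j)
    rw [this]; exact rowzero j
  -- discrete double telescoping identity
  have hid : ∀ i j : ℕ, ∑ k ∈ range i, ∑ l ∈ range j, C k l
      = φ i j - φ i 0 - φ 0 j + φ 0 0 := by
    intro i j
    have inner : ∀ k, ∑ l ∈ range j, C k l
        = (φ (k+1) j - φ k j) - (φ (k+1) 0 - φ k 0) := by
      intro k
      have h1 : ∑ l ∈ range j, C k l
          = ∑ l ∈ range j, ((fun l => φ (k+1) l - φ k l) (l+1)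
              - (fun l => φ (k+1) l - φ k l) l) := by
        apply Finset.sum_congr rfl
        intro l _
        simp only [hC]
        ring
      rw [h1, Finset.sum_range_sub (fun l => φ (k+1) l - φ k l) j]
    have h2 : ∑ k ∈ range i, ∑ l ∈ range j, C k l
        = ∑ k ∈ range i, ((fun k => φ k j - φ k 0) (k+1) - (fun k => φ k j - φ k 0) k) := by
      apply Finset.sum_congr rfl
      intro k _
      rw [inner k]
      ring
    rw [h2, Finset.sum_range_sub (fun k => φ k j - φ k 0) i]
    ring
  -- nonnegativity of the tail double sums
  have hH : ∀ k l : ℕ, 0 ≤ ∑ i ∈ range n, ∑ j ∈ range n,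
      (if k < i ∧ l < j then Dn i j else 0) := by
    intro k l
    by_cases hk1 : k + 1 < n
    · by_cases hl1 : l + 1 < n
      · have h0 := lemA (g (k+1)) (g (l+1))
        have htrans : ∑ a ∈ upSet (g (k+1)), ∑ b ∈ upSet (g (l+1)), D a b
            = ∑ i ∈ range n, ∑ j ∈ range n, (if k < i ∧ l < j then Dn i j else 0) := by
          have step1 : ∑ a ∈ upSet (g (k+1)), ∑ b ∈ upSet (g (l+1)), D a b
              = ∑ a : S, if g (k+1) ≤ a then
                  (∑ b : S, if g (l+1) ≤ b then D a b else 0) else 0 := by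
            rw [upSet, Finset.sum_filter]
            apply Finset.sum_congr rfl
            intro a _
            refine if_congr Iff.rfl ?_ rfl
            rw [upSet, Finset.sum_filter]
          rw [step1]
          rw [sumS (fun a => if g (k+1) ≤ a then
              (∑ b : S, if g (l+1) ≤ b then D a b else 0) else 0)]
          apply Finset.sum_congr rfl
          intro i hi
          have hi' := mem_range.mp hi
          by_cases hki : k < i
          · have hgi : g (k+1) ≤ g i := (hg_le (k+1) i hk1 hi').mpr (by omega)
            rw [if_pos hgi]
            rw [sumS (fun b => if g (l+1) ≤ b then D (g i) b else 0)]
            apply Finset.sum_congr rfl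
            intro j hj
            have hj' := mem_range.mp hj
            by_cases hlj : l < j
            · have hgj : g (l+1) ≤ g j := (hg_le (l+1) j hl1 hj').mpr (by omega)
              rw [if_pos hgj, if_pos ⟨hki, hlj⟩]
            · have hgj : ¬ g (l+1) ≤ g j := by
                rw [hg_le (l+1) j hl1 hj']; omega
              rw [if_neg hgj, if_neg (by tauto)]
          · have hgi : ¬ g (k+1) ≤ g i := by
              rw [hg_le (k+1) i hk1 hi']; omega
            rw [if_neg hgi]
            symm
            apply Finset.sum_eq_zero
            intro j _
            exact if_neg (by tauto)
        rw [← htrans]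
        exact h0
      · apply le_of_eq
        symm
        apply Finset.sum_eq_zero
        intro i _
        apply Finset.sum_eq_zero
        intro j hj
        have hj' := mem_range.mp hj
        exact if_neg (by omega)
    · apply le_of_eq
      symm
      apply Finset.sum_eq_zero
      intro i hi
      have hi' := mem_range.mp hi
      apply Finset.sum_eq_zero
      intro j _
      exact if_neg (by omega)
  -- reduce the goal to nonnegativity of the D-expectation
  rw [← sub_nonneg, ← Finset.sum_sub_distrib]
  have hred : ∀ a : S, (∑ b : S, F a b * f a b) - ∑ b : S, Q a b * f a b
      = ∑ b : S, D a b * f a b := by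
    intro a
    rw [← Finset.sum_sub_distrib]
    apply Finset.sum_congr rfl
    intro b _
    simp only [hD]
    ring
  rw [Finset.sum_congr rfl (fun a _ => hred a)]
  -- transfer the main sum to ℕ
  have hT : ∑ a : S, ∑ b : S, D a b * f a b
      = ∑ i ∈ range n, ∑ j ∈ range n, Dn i j * φ i j := by
    rw [sumS (fun a => ∑ b : S, D a b * f a b)]
    apply Finset.sum_congr rfl
    intro i _
    rw [sumS (fun b => D (g i) b * f (g i) b)]
  rw [hT]
  -- expand each term using the telescoping identity
  have key : ∀ i ∈ range n, ∀ j ∈ range n,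
      Dn i j * φ i j = Dn i j * φ i 0 + Dn i j * φ 0 j - Dn i j * φ 0 0
        + ∑ k ∈ range n, ∑ l ∈ range n, (if k < i ∧ l < j then Dn i j * C k l else 0) := by
    intro i hi j hj
    have hi' : i ≤ n := le_of_lt (mem_range.mp hi)
    have hj' : j ≤ n := le_of_lt (mem_range.mp hj)
    have e1 : ∑ k ∈ range i, ∑ l ∈ range j, C k l
        = ∑ k ∈ range n, ∑ l ∈ range n, (if k < i ∧ l < j then C k l else 0) := by
      rw [sum_range_restrict hi' (fun k => ∑ l ∈ range j, C k l)]
      apply Finset.sum_congr rfl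
      intro k _
      by_cases hk : k < i
      · rw [if_pos hk, sum_range_restrict hj' (C k)]
        apply Finset.sum_congr rfl
        intro l _
        by_cases hl : l < j
        · rw [if_pos hl, if_pos ⟨hk, hl⟩]
        · rw [if_neg hl, if_neg (by tauto)]
      · rw [if_neg hk]
        symm
        apply Finset.sum_eq_zero
        intro l _
        exact if_neg (by tauto)
    have hbig := hid i j
    rw [e1] at hbig
    have hmul : Dn i j * (∑ k ∈ range n, ∑ l ∈ range n,
          (if k < i ∧ l < j then C k l else 0))
        = ∑ k ∈ range n, ∑ l ∈ range n, (if k < i ∧ l < j then Dn i j * C k l else 0) := by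
      rw [Finset.mul_sum]
      apply Finset.sum_congr rfl
      intro k _
      rw [Finset.mul_sum]
      apply Finset.sum_congr rfl
      intro l _
      split <;> ring
    have hφij : φ i j = φ i 0 + φ 0 j - φ 0 0
        + ∑ k ∈ range n, ∑ l ∈ range n, (if k < i ∧ l < j then C k l else 0) := by
      linarith
    calc Dn i j * φ i j
        = Dn i j * φ i 0 + Dn i j * φ 0 j - Dn i j * φ 0 0
          + Dn i j * (∑ k ∈ range n, ∑ l ∈ range n,
              (if k < i ∧ l < j then C k l else 0)) := by rw [hφij]; ring
      _ = _ := by rw [hmul]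
  rw [Finset.sum_congr rfl (fun i hi => Finset.sum_congr rfl (fun j hj => key i hi j hj))]
  simp only [Finset.sum_add_distrib, Finset.sum_sub_distrib]
  -- the three marginal groups vanish
  have T1 : ∑ i ∈ range n, ∑ j ∈ range n, Dn i j * φ i 0 = 0 := by
    apply Finset.sum_eq_zero
    intro i _
    rw [← Finset.sum_mul, rowzero i, zero_mul]
  have T2 : ∑ i ∈ range n, ∑ j ∈ range n, Dn i j * φ 0 j = 0 := by
    rw [Finset.sum_comm]
    apply Finset.sum_eq_zero
    intro j _
    rw [← Finset.sum_mul, colzero j, zero_mul]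
  have T3 : ∑ i ∈ range n, ∑ j ∈ range n, Dn i j * φ 0 0 = 0 := by
    apply Finset.sum_eq_zero
    intro i _
    rw [← Finset.sum_mul, rowzero i, zero_mul]
  rw [T1, T2, T3]
  -- the remaining fourfold sum is nonnegative
  have T4 : ∑ i ∈ range n, ∑ j ∈ range n, ∑ k ∈ range n, ∑ l ∈ range n,
      (if k < i ∧ l < j then Dn i j * C k l else 0)
      = ∑ k ∈ range n, ∑ l ∈ range n,
          C k l * (∑ i ∈ range n, ∑ j ∈ range n, (if k < i ∧ l < j then Dn i j else 0)) := by
    rw [sum4_swap]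
    apply Finset.sum_congr rfl
    intro k _
    apply Finset.sum_congr rfl
    intro l _
    rw [Finset.mul_sum]
    apply Finset.sum_congr rfl
    intro i _
    rw [Finset.mul_sum]
    apply Finset.sum_congr rfl
    intro j _
    split <;> ring
  rw [T4]
  have : 0 ≤ ∑ k ∈ range n, ∑ l ∈ range n,
      C k l * (∑ i ∈ range n, ∑ j ∈ range n, (if k < i ∧ l < j then Dn i j else 0)) := by
    apply Finset.sum_nonneg
    intro k _
    apply Finset.sum_nonneg
    intro l _
    exact mul_nonneg (hCpos k l) (hH k l)
  linarith
end

section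
/- Let F and Q be exchangeable information structures on S × S with identical, strictly positive marginals, suppose F is CAD-higher than Q, and let x : S → ℝ. For an exchangeable G define iteratively T_0(G) := S and T_{k+1}(G) := {s ∈ T_k(G) : G_s(T_k(G)) ≥ 1 − x(s)}. Then T_k(Q) ⊆ T_k(F) for every k ≥ 0, and consequently ⋂_{k≥0} T_k(Q) ⊆ ⋂_{k≥0} T_k(F). (Interpretation: in the two-player investment game where investing yields payoff x(s_i) if the other invests and x(s_i) − 1 otherwise, and not investing yields 0, every type for which investing is rationalizable under Q remains rationalizable under F.) -/
open Finset

/-- `F` is CAD-higher than `Q` (two players). -/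
def CAD2 {S : Type*} [Fintype S] [DecidableEq S] (F Q : S → S → ℝ) : Prop :=
  (∀ s, marg2 F s = marg2 Q s) ∧
  ∀ s : S, condProb2 F s {s} ≥ condProb2 Q s {s} ∧
    ∀ s' : S, s' ≠ s → condProb2 F s {s'} ≤ condProb2 Q s {s'}

/-- Iterated rationalizability sets for the two-player investment game:
`T_0 = S`, `T_{k+1} = {s ∈ T_k : G_s(T_k) ≥ 1 − x(s)}`. -/
noncomputable def Titer {S : Type*} [Fintype S] (G : S → S → ℝ) (x : S → ℝ) :
    ℕ → Finset S
  | 0 => univ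
  | k + 1 => (Titer G x k).filter (fun s => 1 - x s ≤ condProb2 G s (Titer G x k))

/-- under a CAD increase of information, the iterated
rationalizability sets for investing weakly expand at every stage, and hence so
does their intersection: every type for which investing is rationalizable under
`Q` remains rationalizable under `F`. -/
theorem cad_rationalizable_monotone {S : Type*} [Fintype S] [DecidableEq S] [Nonempty S]
    (F Q : S → S → ℝ)
    (hFnn : ∀ a b, 0 ≤ F a b) (hQnn : ∀ a b, 0 ≤ Q a b)
    (hFsum : ∑ a : S, ∑ b : S, F a b = 1) (hQsum : ∑ a : S, ∑ b : S, Q a b = 1)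
    (hFex : ∀ a b, F a b = F b a) (hQex : ∀ a b, Q a b = Q b a)
    (hmarg : ∀ s, marg2 F s = marg2 Q s)
    (hpos : ∀ s, 0 < marg2 F s)
    (hCAD : CAD2 F Q) (x : S → ℝ) :
    (∀ k : ℕ, Titer Q x k ⊆ Titer F x k) ∧
    (⋂ k : ℕ, (Titer Q x k : Set S)) ⊆ ⋂ k : ℕ, (Titer F x k : Set S) := by
  have hQpos : ∀ s, 0 < marg2 Q s := fun s => (hmarg s) ▸ hpos s
  have hle : ∀ s b : S, b ≠ s → F s b ≤ Q s b := by
    intro s b hb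
    have h := (hCAD.2 s).2 b hb
    unfold condProb2 at h
    simp only [Finset.sum_singleton] at h
    rw [hmarg s] at h
    exact (div_le_div_iff_of_pos_right (hQpos s)).1 h
  have hkey : ∀ (s : S) (K : Finset S), s ∈ K →
      condProb2 Q s K ≤ condProb2 F s K := by
    intro s K hs
    unfold condProb2
    rw [hmarg s]
    apply (div_le_div_iff_of_pos_right (hQpos s)).2
    have hF : ∑ b ∈ K, F s b = marg2 F s - ∑ b ∈ Kᶜ, F s b := by
      unfold marg2
      rw [← Finset.sum_add_sum_compl K (F s)]; ring
    have hQ : ∑ b ∈ K, Q s b = marg2 Q s - ∑ b ∈ Kᶜ, Q s b := by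
      unfold marg2
      rw [← Finset.sum_add_sum_compl K (Q s)]; ring
    rw [hF, hQ, hmarg s]
    have : ∑ b ∈ Kᶜ, F s b ≤ ∑ b ∈ Kᶜ, Q s b := by
      apply Finset.sum_le_sum
      intro b hb
      exact hle s b (fun h => (Finset.mem_compl.1 hb) (h ▸ hs))
    linarith
  have hmono : ∀ (s : S) (K K' : Finset S), K ⊆ K' →
      condProb2 F s K ≤ condProb2 F s K' := by
    intro s K K' hKK
    unfold condProb2
    apply (div_le_div_iff_of_pos_right (hpos s)).2
    exact Finset.sum_le_sum_of_subset_of_nonneg hKK (fun b _ _ => hFnn s b)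
  have hsub : ∀ k : ℕ, Titer Q x k ⊆ Titer F x k := by
    intro k
    induction k with
    | zero => simp [Titer]
    | succ k ih =>
      intro s hs
      simp only [Titer, Finset.mem_filter] at hs ⊢
      obtain ⟨hsT, hsx⟩ := hs
      refine ⟨ih hsT, ?_⟩
      calc 1 - x s ≤ condProb2 Q s (Titer Q x k) := hsx
        _ ≤ condProb2 F s (Titer Q x k) := hkey s _ hsT
        _ ≤ condProb2 F s (Titer F x k) := hmono s _ _ ih
  refine ⟨hsub, ?_⟩
  intro a ha
  simp only [Set.mem_iInter, Finset.coe_subset, Finset.mem_coe] at ha ⊢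
  exact fun k => hsub k (ha k)
end
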